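/- Let B be an N×N real symmetric positive semidefinite matrix with eigendecomposition B = Σᵢ λᵢ uᵢuᵢᵀ, eigenvalues λᵢ > 0, and η > 0 with η < 1/λ_max(B). Let Y ∈ [0,1]^N, m, n positive integers with N = mn, and define L_t = (1/m)·Σᵢ (1 - ηλᵢ)^(2t)·(uᵢᵀY)². Then for all t ≥ 0, L_t ≤ m·n²·(1 - η·λ̄)^q, where λ̄ = (1/N)·Σᵢ λᵢ, and q = 2t if t < 1/2 and q = 1 if t ≥ 1/2. -/

import Mathlib

/-!
Each squared coefficient `⟪u_l, Y⟫²` is at most `‖Y‖² ≤ N`, so it remains to bound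
`∑ (1 - η λ_l) ^ (2t)` by `N (1 - η λ̄) ^ q`. The numbers `1 - η λ_l` lie in `[0, 1]` and their mean
is `1 - η λ̄`; for `2t ≤ 1` the bound is Jensen's inequality for the concave map `x ↦ x ^ (2t)`,
and for `2t ≥ 1` it follows from `x ^ (2t) ≤ x` on `[0, 1]`.
-/

open Finset

section

variable {ι : Type*} [Fintype ι]

theorem sum_rpow_le_card_mul_mean_rpow [Nonempty ι] {x : ι → ℝ} (hx : ∀ i, 0 ≤ x i)
    {p : ℝ} (hp₀ : 0 ≤ p) (hp₁ : p ≤ 1) :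
    ∑ i, x i ^ p ≤ Fintype.card ι * ((∑ i, x i) / Fintype.card ι) ^ p := by
  have hcard : (0 : ℝ) < Fintype.card ι := by exact_mod_cast Fintype.card_pos
  have hjensen := (Real.concaveOn_rpow hp₀ hp₁).le_map_sum (t := univ)
    (w := fun _ => (Fintype.card ι : ℝ)⁻¹) (p := x) (fun _ _ => by positivity)
    (by simp [hcard.ne']) (fun i _ => hx i)
  simp only [smul_eq_mul] at hjensen
  rwa [← mul_sum, ← mul_sum, inv_mul_eq_div, inv_mul_eq_div, div_le_iff₀' hcard] at hjensen

theorem sum_rpow_le_card_mul_mean_rpow_min {x : ι → ℝ} (hx : ∀ i, x i ∈ Set.Icc 0 1)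
    {p : ℝ} (hp : 0 ≤ p) :
    ∑ i, x i ^ p ≤ Fintype.card ι * ((∑ i, x i) / Fintype.card ι) ^ min p 1 := by
  rcases isEmpty_or_nonempty ι with hι | hι
  · simp
  rcases le_total p 1 with hp₁ | hp₁
  · rw [min_eq_left hp₁]
    exact sum_rpow_le_card_mul_mean_rpow (fun i => (hx i).1) hp hp₁
  · have hcard : (Fintype.card ι : ℝ) ≠ 0 := by exact_mod_cast Fintype.card_ne_zero
    rw [min_eq_right hp₁, Real.rpow_one, mul_div_cancel₀ _ hcard]
    exact sum_le_sum fun i _ => Real.rpow_le_self_of_le_one (hx i).1 (hx i).2 hp₁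

theorem EuclideanSpace.norm_sq_le_card {x : EuclideanSpace ℝ ι} (hx : ∀ i, |x i| ≤ 1) :
    ‖x‖ ^ 2 ≤ Fintype.card ι := by
  rw [EuclideanSpace.real_norm_sq_eq, ← nsmul_one, ← card_univ, ← sum_const]
  exact sum_le_sum fun i _ => (sq_le_one_iff_abs_le_one _).mpr (hx i)

end

theorem real_inner_sq_le_norm_sq_of_norm_eq_one {E : Type*} [NormedAddCommGroup E]
    [InnerProductSpace ℝ E] {u : E} (hu : ‖u‖ = 1) (y : E) : inner ℝ u y ^ 2 ≤ ‖y‖ ^ 2 := by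
  have hcs := abs_real_inner_le_norm u y
  simpa [hu] using sq_le_sq' (neg_le_of_abs_le hcs) (le_of_abs_le hcs)

theorem stmt_5_general (N m n : ℕ) (hm : 0 < m) (hn : 0 < n) (hN : N = m * n)
    (lam : Fin N → ℝ) (u : Fin N → EuclideanSpace ℝ (Fin N))
    (hunit : ∀ l, ‖u l‖ = 1)
    (η : ℝ) (hη : 0 < η) (hηmax : ∀ l, η < 1 / lam l)
    (Y : EuclideanSpace ℝ (Fin N)) (hY : ∀ i, Y i ∈ Set.Icc (0 : ℝ) 1)
    (t : ℝ) (ht : 0 ≤ t) :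
    (1 : ℝ) / m * ∑ l, (1 - η * lam l) ^ (2 * t) * (inner ℝ (u l) Y : ℝ) ^ 2 ≤
      m * n ^ 2 *
        (1 - η * ((1 : ℝ) / N * ∑ l, lam l)) ^
          (if t < (1 : ℝ) / 2 then 2 * t else 1) := by
  have hN₀ : (N : ℝ) ≠ 0 := by rw [hN]; positivity
  have hstep : ∀ l, 1 - η * lam l ∈ Set.Icc 0 1 := fun l => by
    have hlam : 0 < lam l := one_div_pos.mp (hη.trans (hηmax l))
    have hlt : η * lam l < 1 := (lt_div_iff₀ hlam).mp (hηmax l)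
    exact ⟨by linarith, by linarith [mul_pos hη hlam]⟩
  have hmean : (∑ l, (1 - η * lam l)) / N = 1 - η * ((1 : ℝ) / N * ∑ l, lam l) := by
    rw [sum_sub_distrib, ← mul_sum]
    field_simp
    simp
  have hexp : (if t < (1 : ℝ) / 2 then 2 * t else 1) = min (2 * t) 1 := by
    split_ifs with h
    · exact (min_eq_left (by linarith)).symm
    · exact (min_eq_right (by linarith)).symm
  have hY2 : ‖Y‖ ^ 2 ≤ N := by
    simpa using EuclideanSpace.norm_sq_le_card fun i =>
      abs_le.mpr ⟨by linarith [(hY i).1], (hY i).2⟩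
  have hsum := sum_rpow_le_card_mul_mean_rpow_min hstep (by positivity : 0 ≤ 2 * t)
  simp only [Fintype.card_fin, hmean, ← hexp] at hsum
  calc (1 : ℝ) / m * ∑ l, (1 - η * lam l) ^ (2 * t) * (inner ℝ (u l) Y : ℝ) ^ 2
      ≤ (1 : ℝ) / m * ((∑ l, (1 - η * lam l) ^ (2 * t)) * N) := by
        rw [sum_mul]
        gcongr with l
        · exact Real.rpow_nonneg (hstep l).1 _
        · exact (real_inner_sq_le_norm_sq_of_norm_eq_one (hunit l) Y).trans hY2
    _ ≤ (1 : ℝ) / m * ((N * _) * N) := by gcongr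
    _ = _ := by
        subst hN
        push_cast
        field_simp

theorem stmt_5 (N m n : ℕ) (hm : 0 < m) (hn : 0 < n) (hN : N = m * n)
    (B : Matrix (Fin N) (Fin N) ℝ) (hB : B.PosSemidef)
    (lam : Fin N → ℝ) (u : Fin N → EuclideanSpace ℝ (Fin N))
    (hdecomp : ∀ i j : Fin N,
      B i j = ∑ l, lam l * (u l i * u l j))
    (hunit : ∀ l, ‖u l‖ = 1)
    (hpos : ∀ l, 0 < lam l)
    (η : ℝ) (hη : 0 < η) (hηmax : ∀ l, η < 1 / lam l)
    (Y : EuclideanSpace ℝ (Fin N)) (hY : ∀ i, Y i ∈ Set.Icc (0 : ℝ) 1)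
    (t : ℝ) (ht : 0 ≤ t) :
    (1 : ℝ) / m * ∑ l, (1 - η * lam l) ^ (2 * t) * (inner ℝ (u l) Y : ℝ) ^ 2 ≤
      m * n ^ 2 *
        (1 - η * ((1 : ℝ) / N * ∑ l, lam l)) ^
          (if t < (1 : ℝ) / 2 then 2 * t else 1) :=
  stmt_5_general N m n hm hn hN lam u hunit η hη hηmax Y hY t ht
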